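/- arXiv:math/0608007 — 4 statements merged into one kernel-verified Lean document; each statement's English description precedes it below -/
import Mathlib

section
/- For any approximate coarse-grained Hamiltonian K : T → ℝ, the relative entropy of the approximate coarse Gibbs measure with respect to the pushforward of the microscopic Gibbs measure admits the exact a posteriori representation R(μ_K | μ_H ∘ F⁻¹) = β Σ_{η∈T} (H̄(η) − K(η)) μ_K(η) + log( Σ_{η∈T} exp(−β(H̄(η) − K(η))) μ_K(η) ), i.e., it equals β·E_{μ_K}[H̄ − K] + log E_{μ_K}[exp(−β(H̄ − K))]. -/
open Finset

/-- **Exact a posteriori representation of the relative entropy:**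
`R(μ_K | μ_H ∘ F⁻¹) = β·E_{μ_K}[H̄ − K] + log E_{μ_K}[exp(−β(H̄ − K))]`. -/
theorem coarse_relativeEntropy_a_posteriori
    {S T : Type*} [Fintype S] [Nonempty S] [Fintype T] [DecidableEq T]
    (P : S → ℝ) (hPpos : ∀ σ, 0 < P σ) (hPsum : ∑ σ : S, P σ = 1)
    (β : ℝ) (hβ : 0 < β) (H : S → ℝ)
    (F : S → T) (hF : Function.Surjective F)
    (Pbar : T → ℝ)
    (hPbar : ∀ η, Pbar η = ∑ σ ∈ Finset.univ.filter (fun σ => F σ = η), P σ)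
    (Hbar : T → ℝ)
    (hHbar : ∀ η, Real.exp (-β * Hbar η)
      = (∑ σ ∈ Finset.univ.filter (fun σ => F σ = η), Real.exp (-β * H σ) * P σ) / Pbar η)
    (ZH : ℝ) (hZH : ZH = ∑ σ : S, Real.exp (-β * H σ) * P σ)
    (μH : S → ℝ) (hμH : ∀ σ, μH σ = Real.exp (-β * H σ) * P σ / ZH)
    (μpush : T → ℝ)
    (hμpush : ∀ η, μpush η = ∑ σ ∈ Finset.univ.filter (fun σ => F σ = η), μH σ)
    (K : T → ℝ) (ZK : ℝ)
    (hZK : ZK = ∑ η : T, Real.exp (-β * K η) * Pbar η)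
    (μK : T → ℝ) (hμK : ∀ η, μK η = Real.exp (-β * K η) * Pbar η / ZK) :
    ∑ η : T, μK η * Real.log (μK η / μpush η)
      = β * (∑ η : T, (Hbar η - K η) * μK η)
        + Real.log (∑ η : T, Real.exp (-β * (Hbar η - K η)) * μK η) := by
  have hTne : Nonempty T := ⟨F (Classical.arbitrary S)⟩
  have hPbarpos : ∀ η, 0 < Pbar η := by
    intro η
    rw [hPbar]
    obtain ⟨σ, hσ⟩ := hF η
    exact Finset.sum_pos (fun i _ => hPpos i)
      ⟨σ, Finset.mem_filter.mpr ⟨Finset.mem_univ _, hσ⟩⟩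
  have hZHpos : 0 < ZH := by
    rw [hZH]
    exact Finset.sum_pos (fun i _ => mul_pos (Real.exp_pos _) (hPpos i)) Finset.univ_nonempty
  have hZKpos : 0 < ZK := by
    rw [hZK]
    exact Finset.sum_pos (fun i _ => mul_pos (Real.exp_pos _) (hPbarpos i)) Finset.univ_nonempty
  -- fiberwise identity: e^{-β Hbar η} * Pbar η = fiber sum
  have hE : ∀ η, Real.exp (-β * Hbar η) * Pbar η
      = ∑ σ ∈ Finset.univ.filter (fun σ => F σ = η), Real.exp (-β * H σ) * P σ := by
    intro η
    rw [hHbar η, div_mul_cancel₀ _ (hPbarpos η).ne']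
  have hZHfib : ∑ η : T, Real.exp (-β * Hbar η) * Pbar η = ZH := by
    rw [hZH]
    rw [Finset.sum_congr rfl (fun η _ => hE η)]
    exact Finset.sum_fiberwise _ _ _
  have hμpush' : ∀ η, μpush η = Real.exp (-β * Hbar η) * Pbar η / ZH := by
    intro η
    rw [hμpush, hE]
    rw [Finset.sum_congr rfl (fun σ _ => hμH σ), Finset.sum_div]
  have hμKsum : ∑ η : T, μK η = 1 := by
    rw [Finset.sum_congr rfl (fun η _ => hμK η), ← Finset.sum_div, ← hZK,
      div_self hZKpos.ne']
  have hlast : ∑ η : T, Real.exp (-β * (Hbar η - K η)) * μK η = ZH / ZK := by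
    rw [← hZHfib, Finset.sum_div]
    refine Finset.sum_congr rfl fun η _ => ?_
    have h3 : Real.exp (-β * (Hbar η - K η)) * Real.exp (-β * K η)
        = Real.exp (-β * Hbar η) := by
      rw [← Real.exp_add]; ring_nf
    rw [hμK, mul_div_assoc, ← mul_assoc, h3, ← mul_div_assoc]
  have hlog : ∀ η, Real.log (μK η / μpush η)
      = β * (Hbar η - K η) + Real.log (ZH / ZK) := by
    intro η
    have key : μK η / μpush η = Real.exp (β * (Hbar η - K η)) * (ZH / ZK) := by
      have h1 : Real.exp (β * (Hbar η - K η))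
          = Real.exp (-β * K η) / Real.exp (-β * Hbar η) := by
        rw [← Real.exp_sub]; ring_nf
      rw [hμK, hμpush' η, div_div_div_comm, mul_div_mul_right _ _ (hPbarpos η).ne',
        ← h1, div_div_eq_mul_div, mul_div_assoc]
    rw [key, Real.log_mul (Real.exp_pos _).ne' (div_pos hZHpos hZKpos).ne', Real.log_exp]
  calc ∑ η : T, μK η * Real.log (μK η / μpush η)
      = ∑ η : T, (β * ((Hbar η - K η) * μK η) + Real.log (ZH / ZK) * μK η) := by
        refine Finset.sum_congr rfl fun η _ => ?_
        rw [hlog η]; ring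
    _ = β * (∑ η : T, (Hbar η - K η) * μK η) + Real.log (ZH / ZK) * ∑ η : T, μK η := by
        rw [Finset.sum_add_distrib, Finset.mul_sum, Finset.mul_sum]
    _ = β * (∑ η : T, (Hbar η - K η) * μK η)
        + Real.log (∑ η : T, Real.exp (-β * (Hbar η - K η)) * μK η) := by
        rw [hμKsum, mul_one, hlast]
end

section
/- If c ≥ 0 and the approximate coarse-grained Hamiltonian K : T → ℝ satisfies the uniform bound |H̄(η) − K(η)| ≤ c for every η ∈ T, then the relative entropy satisfies 0 ≤ R(μ_K | μ_H ∘ F⁻¹) ≤ 2βc. -/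
open Finset

/-- **A priori bound:** if `|H̄(η) − K(η)| ≤ c` uniformly, then
`0 ≤ R(μ_K | μ_H ∘ F⁻¹) ≤ 2βc`. -/
theorem coarse_relativeEntropy_bound
    {S T : Type*} [Fintype S] [Nonempty S] [Fintype T] [DecidableEq T]
    (P : S → ℝ) (hPpos : ∀ σ, 0 < P σ) (hPsum : ∑ σ : S, P σ = 1)
    (β : ℝ) (hβ : 0 < β) (H : S → ℝ)
    (F : S → T) (hF : Function.Surjective F)
    (Pbar : T → ℝ)
    (hPbar : ∀ η, Pbar η = ∑ σ ∈ Finset.univ.filter (fun σ => F σ = η), P σ)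
    (Hbar : T → ℝ)
    (hHbar : ∀ η, Real.exp (-β * Hbar η)
      = (∑ σ ∈ Finset.univ.filter (fun σ => F σ = η), Real.exp (-β * H σ) * P σ) / Pbar η)
    (ZH : ℝ) (hZH : ZH = ∑ σ : S, Real.exp (-β * H σ) * P σ)
    (μH : S → ℝ) (hμH : ∀ σ, μH σ = Real.exp (-β * H σ) * P σ / ZH)
    (μpush : T → ℝ)
    (hμpush : ∀ η, μpush η = ∑ σ ∈ Finset.univ.filter (fun σ => F σ = η), μH σ)
    (K : T → ℝ) (ZK : ℝ)
    (hZK : ZK = ∑ η : T, Real.exp (-β * K η) * Pbar η)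
    (μK : T → ℝ) (hμK : ∀ η, μK η = Real.exp (-β * K η) * Pbar η / ZK)
    (c : ℝ) (hc : 0 ≤ c) (hKc : ∀ η, |Hbar η - K η| ≤ c) :
    0 ≤ ∑ η : T, μK η * Real.log (μK η / μpush η)
      ∧ ∑ η : T, μK η * Real.log (μK η / μpush η) ≤ 2 * β * c := by
  haveI : Nonempty T := ⟨F (Classical.arbitrary S)⟩
  -- positivity facts
  have hPbarpos : ∀ η, 0 < Pbar η := by
    intro η
    obtain ⟨σ, hσ⟩ := hF η
    rw [hPbar]
    apply Finset.sum_pos (fun σ _ => hPpos σ)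
    exact ⟨σ, by simp [hσ]⟩
  have hZHpos : 0 < ZH := by
    rw [hZH]
    exact Finset.sum_pos (fun σ _ => mul_pos (Real.exp_pos _) (hPpos σ)) univ_nonempty
  have hZKpos : 0 < ZK := by
    rw [hZK]
    exact Finset.sum_pos (fun η _ => mul_pos (Real.exp_pos _) (hPbarpos η)) univ_nonempty
  -- fiber sum identity
  have hfiber : ∀ η, ∑ σ ∈ Finset.univ.filter (fun σ => F σ = η), Real.exp (-β * H σ) * P σ
      = Real.exp (-β * Hbar η) * Pbar η := by
    intro η
    rw [hHbar η, div_mul_cancel₀]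
    exact (hPbarpos η).ne'
  have hμpush' : ∀ η, μpush η = Real.exp (-β * Hbar η) * Pbar η / ZH := by
    intro η
    rw [hμpush, ← hfiber, Finset.sum_div]
    exact Finset.sum_congr rfl fun σ _ => (hμH σ).symm ▸ rfl
  have hμpushpos : ∀ η, 0 < μpush η := fun η => by
    rw [hμpush']; exact div_pos (mul_pos (Real.exp_pos _) (hPbarpos η)) hZHpos
  have hμKpos : ∀ η, 0 < μK η := fun η => by
    rw [hμK]; exact div_pos (mul_pos (Real.exp_pos _) (hPbarpos η)) hZKpos
  -- sums to one
  have hμKsum : ∑ η : T, μK η = 1 := by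
    simp only [hμK]
    rw [← Finset.sum_div, ← hZK, div_self hZKpos.ne']
  have hμpushsum : ∑ η : T, μpush η = 1 := by
    simp only [hμpush']
    rw [← Finset.sum_div]
    have : ∑ η : T, Real.exp (-β * Hbar η) * Pbar η = ZH := by
      rw [hZH]
      rw [← Finset.sum_fiberwise (g := F) (f := fun σ => Real.exp (-β * H σ) * P σ)]
      exact Finset.sum_congr rfl fun η _ => (hfiber η).symm
    rw [this, div_self hZHpos.ne']
  -- log formula
  have hlog : ∀ η, Real.log (μK η / μpush η)
      = β * (Hbar η - K η) + (Real.log ZH - Real.log ZK) := by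
    intro η
    rw [hμK, hμpush']
    rw [Real.log_div (div_pos (mul_pos (Real.exp_pos _) (hPbarpos η)) hZKpos).ne'
          (div_pos (mul_pos (Real.exp_pos _) (hPbarpos η)) hZHpos).ne',
        Real.log_div (mul_pos (Real.exp_pos _) (hPbarpos η)).ne' hZHpos.ne',
        Real.log_div (mul_pos (Real.exp_pos _) (hPbarpos η)).ne' hZKpos.ne',
        Real.log_mul (Real.exp_pos _).ne' (hPbarpos η).ne',
        Real.log_mul (Real.exp_pos _).ne' (hPbarpos η).ne',
        Real.log_exp, Real.log_exp]
    ring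
  constructor
  · -- nonnegativity (Gibbs)
    have key : ∑ η : T, μK η * Real.log (μpush η / μK η) ≤ 0 := by
      have h1 : ∀ η : T, μK η * Real.log (μpush η / μK η) ≤ μpush η - μK η := by
        intro η
        have := Real.log_le_sub_one_of_pos (div_pos (hμpushpos η) (hμKpos η))
        calc μK η * Real.log (μpush η / μK η)
            ≤ μK η * (μpush η / μK η - 1) := by
              exact mul_le_mul_of_nonneg_left this (hμKpos η).le
          _ = μpush η - μK η := by
              rw [mul_sub, mul_one, mul_div_cancel₀ _ (hμKpos η).ne']
      calc ∑ η : T, μK η * Real.log (μpush η / μK η)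
          ≤ ∑ η : T, (μpush η - μK η) := Finset.sum_le_sum fun η _ => h1 η
        _ = 0 := by rw [Finset.sum_sub_distrib, hμpushsum, hμKsum]; ring
    have : ∑ η : T, μK η * Real.log (μK η / μpush η)
        = -∑ η : T, μK η * Real.log (μpush η / μK η) := by
      rw [← Finset.sum_neg_distrib]
      refine Finset.sum_congr rfl fun η _ => ?_
      rw [Real.log_div (hμKpos η).ne' (hμpushpos η).ne',
        Real.log_div (hμpushpos η).ne' (hμKpos η).ne']
      ring
    rw [this]
    linarith
  · -- upper bound
    have hsum : ∑ η : T, μK η * Real.log (μK η / μpush η)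
        = β * (∑ η : T, μK η * (Hbar η - K η)) + (Real.log ZH - Real.log ZK) := by
      simp only [hlog]
      rw [Finset.sum_congr rfl (fun η _ => mul_add (μK η) _ _), Finset.sum_add_distrib,
        ← Finset.sum_mul, hμKsum, one_mul, Finset.mul_sum]
      congr 1
      exact Finset.sum_congr rfl fun η _ => by ring
    have h1 : ∑ η : T, μK η * (Hbar η - K η) ≤ c := by
      calc ∑ η : T, μK η * (Hbar η - K η)
          ≤ ∑ η : T, μK η * c := by
            refine Finset.sum_le_sum fun η _ => ?_
            exact mul_le_mul_of_nonneg_left ((abs_le.mp (hKc η)).2) (hμKpos η).le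
        _ = c := by rw [← Finset.sum_mul, hμKsum, one_mul]
    have h2 : Real.log ZH - Real.log ZK ≤ β * c := by
      have hZHle : ZH ≤ Real.exp (β * c) * ZK := by
        rw [hZH, hZK, Finset.mul_sum]
        rw [← Finset.sum_fiberwise (g := F) (f := fun σ => Real.exp (-β * H σ) * P σ)]
        refine Finset.sum_le_sum fun η _ => ?_
        rw [hfiber η, ← mul_assoc, ← Real.exp_add]
        refine mul_le_mul_of_nonneg_right ?_ (hPbarpos η).le
        apply Real.exp_le_exp.mpr
        have := (abs_le.mp (hKc η)).1
        nlinarith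
      have h3 := Real.log_le_log hZHpos hZHle
      rw [Real.log_mul (Real.exp_pos _).ne' hZKpos.ne', Real.log_exp] at h3
      linarith
    rw [hsum]
    have := mul_le_mul_of_nonneg_left h1 hβ.le
    linarith
end

section
/- For all k, l ∈ ℤ^d and all x ∈ C_k, y ∈ C_l (with x ≠ y when k = l), the cell-averaged potential approximates the potential with error |J(x−y) − J̄(k,l)| ≤ 2√d (q / L^{d+1}) ‖∇V‖_∞. -/
open Finset

/-- The pair potential `J(z) = L⁻ᵈ V((n/L) z)` as a function of the difference vector. -/
noncomputable def Jfun (d n : ℕ) (L : ℝ) (V : EuclideanSpace ℝ (Fin d) → ℝ)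
    (z : EuclideanSpace ℝ (Fin d)) : ℝ :=
  (1 / L ^ d) * V (((n : ℝ) / L) • z)

/-- The lattice point `(q·k + a)/n ∈ (1/n)ℤᵈ` of the coarse cell `C_k` with offset `a`. -/
noncomputable def latpos (d n q : ℕ) (k : Fin d → ℤ) (a : Fin d → Fin q) :
    EuclideanSpace ℝ (Fin d) :=
  WithLp.toLp 2 (fun i => ((q : ℝ) * (k i : ℝ) + ((a i : ℕ) : ℝ)) / (n : ℝ))


/-!
Every term `J(x' − y')` in the average `J̄(k,l)` has `x' ∈ C_k` and `y' ∈ C_l`, so each coordinate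
of `(x − y) − (x' − y')` is a difference of two offsets in `{0,…,q−1}`, divided by `n`; hence
`‖(x − y) − (x' − y')‖ ≤ 2√d q/n`. By the mean value inequality `J` is Lipschitz with constant
`‖∇V‖_∞ n / L^{d+1}`, so every term of the average lies within `2√d (q/L^{d+1}) ‖∇V‖_∞` of
`J(x − y)`, and so does the average itself.
-/

theorem abs_sub_sum_div_card_le {ι : Type*} {s : Finset ι} (hs : s.Nonempty) {f : ι → ℝ}
    {x c : ℝ} (h : ∀ i ∈ s, |x - f i| ≤ c) : |x - (∑ i ∈ s, f i) / #s| ≤ c := by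
  have hcard : (0 : ℝ) < #s := mod_cast hs.card_pos
  have hmean : x - (∑ i ∈ s, f i) / #s = (∑ i ∈ s, (x - f i)) / #s := by
    rw [sum_sub_distrib, sum_const, nsmul_eq_mul]
    field_simp
  rw [hmean, abs_div, abs_of_pos hcard, div_le_iff₀ hcard]
  calc |∑ i ∈ s, (x - f i)| ≤ ∑ i ∈ s, |x - f i| := abs_sum_le_sum_abs _ _
    _ ≤ #s • c := sum_le_card_nsmul _ _ _ h
    _ = c * #s := by rw [nsmul_eq_mul, mul_comm]

theorem sum_sum_filter_ne_eq_sum_offDiag {ι M : Type*} [DecidableEq ι] [AddCommMonoid M]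
    (s : Finset ι) (f : ι → ι → M) :
    ∑ a ∈ s, ∑ b ∈ s.filter (fun b => b ≠ a), f a b = ∑ p ∈ s.offDiag, f p.1 p.2 :=
  (sum_finset_product' _ _ _ fun p => by simp [mem_offDiag, ne_comm]).symm

theorem EuclideanSpace.norm_le_sqrt_card_mul {d : ℕ} {x : EuclideanSpace ℝ (Fin d)} {C : ℝ}
    (hC : 0 ≤ C) (h : ∀ i, |x i| ≤ C) : ‖x‖ ≤ √d * C := by
  rw [EuclideanSpace.norm_eq, ← Real.sqrt_sq hC, ← Real.sqrt_mul (Nat.cast_nonneg d)]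
  gcongr
  calc ∑ i, ‖x i‖ ^ 2 ≤ ∑ _i : Fin d, C ^ 2 := by
        gcongr with i
        exact h i
    _ = d * C ^ 2 := by simp

theorem norm_gradient_eq_norm_fderiv {F : Type*} [NormedAddCommGroup F] [InnerProductSpace ℝ F]
    [CompleteSpace F] (f : F → ℝ) (x : F) : ‖gradient f x‖ = ‖fderiv ℝ f x‖ :=
  (InnerProductSpace.toDual ℝ F).symm.norm_map _

theorem abs_sub_le_of_norm_gradient_le {F : Type*} [NormedAddCommGroup F]
    [InnerProductSpace ℝ F] [CompleteSpace F] {f : F → ℝ} (hf : Differentiable ℝ f) {C : ℝ}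
    (hC : ∀ z, ‖gradient f z‖ ≤ C) (x y : F) : |f x - f y| ≤ C * ‖x - y‖ := by
  simpa only [Real.norm_eq_abs] using convex_univ.norm_image_sub_le_of_norm_fderiv_le
    (fun z _ => hf z) (fun z _ => norm_gradient_eq_norm_fderiv f z ▸ hC z)
    (Set.mem_univ y) (Set.mem_univ x)

theorem abs_Jfun_sub_Jfun_le {d n : ℕ} {L : ℝ} (hL : 0 < L) {V : EuclideanSpace ℝ (Fin d) → ℝ}
    (hV : Differentiable ℝ V) {C : ℝ} (hC : ∀ z, ‖gradient V z‖ ≤ C)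
    (z w : EuclideanSpace ℝ (Fin d)) :
    |Jfun d n L V z - Jfun d n L V w| ≤ C / L ^ d * (n / L) * ‖z - w‖ := by
  have hC0 : 0 ≤ C := (norm_nonneg _).trans (hC 0)
  calc |Jfun d n L V z - Jfun d n L V w|
      = 1 / L ^ d * |V ((n / L : ℝ) • z) - V ((n / L : ℝ) • w)| := by
        rw [Jfun, Jfun, ← mul_sub, abs_mul, abs_of_pos (by positivity)]
    _ ≤ 1 / L ^ d * (C * ‖(n / L : ℝ) • z - (n / L : ℝ) • w‖) := by
        gcongr
        exact abs_sub_le_of_norm_gradient_le hV hC _ _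
    _ = C / L ^ d * (n / L) * ‖z - w‖ := by
        rw [← smul_sub, norm_smul, Real.norm_of_nonneg (by positivity)]
        ring

theorem norm_latpos_sub_sub_le (d n q : ℕ) (k l : Fin d → ℤ) (a b a' b' : Fin d → Fin q) :
    ‖(latpos d n q k a - latpos d n q l b) - (latpos d n q k a' - latpos d n q l b')‖
      ≤ √d * (2 * q / n) := by
  have offset_sub : ∀ c c' : Fin q, |((c : ℕ) : ℝ) - (c' : ℕ)| ≤ q := fun c c' =>
    abs_sub_le_of_nonneg_of_le (by positivity) (mod_cast c.is_lt.le) (by positivity)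
      (mod_cast c'.is_lt.le)
  refine EuclideanSpace.norm_le_sqrt_card_mul (by positivity) fun i => ?_
  have hcoord : ((latpos d n q k a - latpos d n q l b) - (latpos d n q k a' - latpos d n q l b')) i
      = ((((a i : ℕ) : ℝ) - (a' i : ℕ)) - (((b i : ℕ) : ℝ) - (b' i : ℕ))) / n := by
    simp only [latpos, PiLp.sub_apply]
    ring
  rw [hcoord, abs_div, Nat.abs_cast]
  gcongr
  exact (abs_sub _ _).trans
    ((add_le_add (offset_sub _ _) (offset_sub _ _)).trans_eq (two_mul _).symm)

theorem abs_Jfun_latpos_sub_le {d n q : ℕ} (hn : n ≠ 0) {L : ℝ} (hL : 0 < L)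
    {V : EuclideanSpace ℝ (Fin d) → ℝ} (hV : Differentiable ℝ V) {C : ℝ}
    (hC : ∀ z, ‖gradient V z‖ ≤ C) (k l : Fin d → ℤ) (a b a' b' : Fin d → Fin q) :
    |Jfun d n L V (latpos d n q k a - latpos d n q l b)
        - Jfun d n L V (latpos d n q k a' - latpos d n q l b')|
      ≤ 2 * √d * (q / L ^ (d + 1)) * C := by
  have hC0 : 0 ≤ C := (norm_nonneg _).trans (hC 0)
  calc _ ≤ C / L ^ d * (n / L) * (√d * (2 * q / n)) := by
        grw [abs_Jfun_sub_Jfun_le hL hV hC, norm_latpos_sub_sub_le]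
    _ = 2 * √d * (q / L ^ (d + 1)) * C := by
        field_simp
        ring

theorem potential_average_error_general
    (d : ℕ) (m q : ℕ) (hm : 1 ≤ m) (hq : 1 ≤ q)
    (L : ℝ) (hL : 1 ≤ L)
    (V : EuclideanSpace ℝ (Fin d) → ℝ) (hV : ContDiff ℝ 1 V)
    (GV : ℝ) (hGV : ∀ z, ‖gradient V z‖ ≤ GV)
    (Jbar : (Fin d → ℤ) → (Fin d → ℤ) → ℝ)
    (hJbar : ∀ k l, Jbar k l =
      if k = l then
        (∑ a : Fin d → Fin q, ∑ b ∈ Finset.univ.filter (fun b => b ≠ a),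
            Jfun d (m * q) L V (latpos d (m * q) q k a - latpos d (m * q) q k b))
          / (((q : ℝ) ^ d) * ((q : ℝ) ^ d - 1))
      else
        (∑ a : Fin d → Fin q, ∑ b : Fin d → Fin q,
            Jfun d (m * q) L V (latpos d (m * q) q k a - latpos d (m * q) q l b))
          / ((q : ℝ) ^ d) ^ 2) :
    ∀ (k l : Fin d → ℤ) (a b : Fin d → Fin q), (k = l → a ≠ b) →
      |Jfun d (m * q) L V (latpos d (m * q) q k a - latpos d (m * q) q l b) - Jbar k l|
        ≤ 2 * Real.sqrt d * ((q : ℝ) / L ^ (d + 1)) * GV := by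
  intro k l a b hab
  have term_close := abs_Jfun_latpos_sub_le (Nat.mul_pos hm hq).ne' (zero_lt_one.trans_le hL)
    (hV.differentiable one_ne_zero) hGV k l a b
  rw [hJbar]
  split_ifs with hkl
  · subst hkl
    have card_cells : #(univ : Finset (Fin d → Fin q)) = q ^ d := by simp
    have card_pairs : (#(univ : Finset (Fin d → Fin q)).offDiag : ℝ)
        = (q : ℝ) ^ d * ((q : ℝ) ^ d - 1) := by
      rw [offDiag_card, card_cells, Nat.cast_sub (Nat.le_mul_self _)]
      push_cast
      ring
    rw [sum_sum_filter_ne_eq_sum_offDiag, ← card_pairs]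
    refine abs_sub_sum_div_card_le ?_ fun p _ => term_close p.1 p.2
    exact ⟨(a, b), by simpa using hab rfl⟩
  · have card_pairs : (#(univ : Finset ((Fin d → Fin q) × (Fin d → Fin q))) : ℝ)
        = ((q : ℝ) ^ d) ^ 2 := by
      simp [sq]
    rw [← Fintype.sum_prod_type', ← card_pairs]
    exact abs_sub_sum_div_card_le ⟨(a, b), mem_univ _⟩ fun p _ => term_close p.1 p.2

/-- **Lemma on the cell-averaging error of the potential:** for all cells `k, l ∈ ℤᵈ` and
sites `x ∈ C_k`, `y ∈ C_l` (with `x ≠ y` when `k = l`),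
`|J(x−y) − J̄(k,l)| ≤ 2√d (q/L^{d+1}) ‖∇V‖_∞`. -/
theorem potential_average_error
    (d : ℕ) (hd : 1 ≤ d) (m q : ℕ) (hm : 1 ≤ m) (hq : 1 ≤ q) (hQ : 2 ≤ q ^ d)
    (L : ℝ) (hL : 1 ≤ L)
    (V : EuclideanSpace ℝ (Fin d) → ℝ) (hV : ContDiff ℝ 1 V)
    (GV : ℝ) (hGV : ∀ z, ‖gradient V z‖ ≤ GV)
    (Jbar : (Fin d → ℤ) → (Fin d → ℤ) → ℝ)
    (hJbar : ∀ k l, Jbar k l =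
      if k = l then
        (∑ a : Fin d → Fin q, ∑ b ∈ Finset.univ.filter (fun b => b ≠ a),
            Jfun d (m * q) L V (latpos d (m * q) q k a - latpos d (m * q) q k b))
          / (((q : ℝ) ^ d) * ((q : ℝ) ^ d - 1))
      else
        (∑ a : Fin d → Fin q, ∑ b : Fin d → Fin q,
            Jfun d (m * q) L V (latpos d (m * q) q k a - latpos d (m * q) q l b))
          / ((q : ℝ) ^ d) ^ 2) :
    ∀ (k l : Fin d → ℤ) (a b : Fin d → Fin q), (k = l → a ≠ b) →
      |Jfun d (m * q) L V (latpos d (m * q) q k a - latpos d (m * q) q l b) - Jbar k l|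
        ≤ 2 * Real.sqrt d * ((q : ℝ) / L ^ (d + 1)) * GV :=
  potential_average_error_general d m q hm hq L hL V hV GV hGV Jbar hJbar
end

section
/- Assume Q ≥ 3. For any three pairwise distinct coordinates x, y, z in {1,…,Q}, the third moment under ν_α is E_{ν_α}[σ(x)σ(y)σ(z)] = (α(α−1)(α−2) − 3α(α−1)ω + 3α(ω−1)ω − (ω−2)(ω−1)ω) / (Q(Q−1)(Q−2)). -/
open Finset

/-- Real spin value of a Boolean spin variable (`true ↦ +1`, `false ↦ −1`). -/
def spin (b : Bool) : ℝ := if b then 1 else -1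

/-- The set of configurations `σ ∈ {−1,+1}^{1,…,Q}` with exactly `α` coordinates `+1`. -/
def cfg (Q α : ℕ) : Finset (Fin Q → Bool) :=
  Finset.univ.filter (fun σ => (Finset.univ.filter (fun i => σ i = true)).card = α)

lemma desc_chain : ∀ (k m n : ℕ), k ≤ m → m ≤ n →
    n.choose m * m.descFactorial k = n.descFactorial k * (n - k).choose (m - k) := by
  intro k
  induction k with
  | zero => simp
  | succ k ih =>
    intro m n hk hm
    have hk' : k ≤ m := by omega
    rw [Nat.descFactorial_succ, Nat.descFactorial_succ, ← Nat.mul_assoc,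
      Nat.mul_comm (n.choose m) (m - k), Nat.mul_assoc, ih m n hk' hm]
    have key : (m - k) * (n - k).choose (m - k) = (n - k) * (n - k - 1).choose (m - k - 1) := by
      obtain ⟨a, ha⟩ : ∃ a, m - k = a + 1 := ⟨m - k - 1, by omega⟩
      obtain ⟨b, hb⟩ : ∃ b, n - k = b + 1 := ⟨n - k - 1, by omega⟩
      rw [ha, hb]
      simp only [Nat.add_sub_cancel]
      have h := Nat.add_one_mul_choose_eq b a
      rw [h]; ring
    have e1 : n - (k+1) = n - k - 1 := by omega
    have e2 : m - (k+1) = m - k - 1 := by omega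
    rw [e1, e2, Nat.mul_left_comm, key]
    ring

lemma count_subsets (Q m : ℕ) (t : Finset (Fin Q)) (hk : t.card ≤ m) :
    (((univ : Finset (Fin Q)).powersetCard m).filter (fun s => t ⊆ s)).card
      = (Q - t.card).choose (m - t.card) := by
  have hcard : (univ \ t : Finset (Fin Q)).card = Q - t.card := by
    rw [card_sdiff_of_subset (subset_univ t), card_univ, Fintype.card_fin]
  rw [← hcard, ← card_powersetCard]
  apply card_bij (fun s _ => s \ t)
  · intro s hs
    simp only [mem_filter, mem_powersetCard] at hs
    obtain ⟨⟨_, hsc⟩, hts⟩ := hs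
    rw [mem_powersetCard]
    exact ⟨sdiff_subset_sdiff (subset_univ s) (le_refl t), by rw [card_sdiff_of_subset hts, hsc]⟩
  · intro s hs s' hs' h
    simp only [mem_filter, mem_powersetCard] at hs hs'
    rw [← sdiff_union_of_subset hs.2, ← sdiff_union_of_subset hs'.2, h]
  · intro u hu
    rw [mem_powersetCard] at hu
    refine ⟨u ∪ t, ?_, ?_⟩
    · simp only [mem_filter, mem_powersetCard]
      have hd : Disjoint u t := disjoint_of_subset_left hu.1 sdiff_disjoint
      refine ⟨⟨subset_univ _, ?_⟩, subset_union_right⟩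
      rw [card_union_of_disjoint hd, hu.2]
      omega
    · have hd : Disjoint u t := disjoint_of_subset_left hu.1 sdiff_disjoint
      rw [union_sdiff_right, sdiff_eq_self_of_disjoint hd]

lemma count_subsets_zero (Q m : ℕ) (t : Finset (Fin Q)) (hk : m < t.card) :
    (((univ : Finset (Fin Q)).powersetCard m).filter (fun s => t ⊆ s)).card = 0 := by
  rw [card_eq_zero, filter_eq_empty_iff]
  intro s hs hts
  rw [mem_powersetCard] at hs
  have := card_le_card hts
  omega

lemma sum_cfg (Q α : ℕ) (f : Finset (Fin Q) → ℝ) :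
    ∑ σ ∈ cfg Q α, f (univ.filter (fun i => σ i = true))
      = ∑ s ∈ (univ : Finset (Fin Q)).powersetCard α, f s := by
  apply Finset.sum_nbij' (i := fun σ => univ.filter (fun i => σ i = true))
    (j := fun s => fun i => decide (i ∈ s))
  · intro σ hσ
    simp only [cfg, mem_filter, mem_univ, true_and] at hσ
    rw [mem_powersetCard]
    exact ⟨filter_subset _ _ |>.trans (subset_univ _), hσ⟩
  · intro s hs
    rw [mem_powersetCard] at hs
    simp only [cfg, mem_filter, mem_univ, true_and]
    rw [← hs.2]
    congr 1
    ext i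
    simp
  · intro σ hσ
    funext i
    simp
  · intro s hs
    ext i
    simp
  · intro σ hσ
    rfl

lemma card_cfg (Q α : ℕ) : (cfg Q α).card = Q.choose α := by
  have h := sum_cfg Q α (fun _ => (1 : ℝ))
  simp only [sum_const, nsmul_eq_mul, mul_one] at h
  rw [card_powersetCard, card_univ, Fintype.card_fin] at h
  exact_mod_cast h

lemma df2_cast (n : ℕ) : ((n.descFactorial 2 : ℕ) : ℝ) = n * (n - 1) := by
  match n with
  | 0 => norm_num
  | (m+1) => simp [Nat.descFactorial]; ring

lemma df3_cast (n : ℕ) : ((n.descFactorial 3 : ℕ) : ℝ) = n * (n - 1) * (n - 2) := by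
  match n with
  | 0 => norm_num
  | 1 => norm_num [Nat.descFactorial]
  | (m+2) => simp [Nat.descFactorial]; ring

/-- **Third moment under the uniform measure `ν_α`:** for pairwise distinct `x, y, z`,
`E_{ν_α}[σ(x)σ(y)σ(z)] = (α(α−1)(α−2) − 3α(α−1)ω + 3α(ω−1)ω − (ω−2)(ω−1)ω)/(Q(Q−1)(Q−2))`
with `ω = Q − α`. -/
theorem third_moment (Q α : ℕ) (hQ : 3 ≤ Q) (hα : α ≤ Q) (x y z : Fin Q)
    (hxy : x ≠ y) (hxz : x ≠ z) (hyz : y ≠ z) :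
    (∑ σ ∈ cfg Q α, spin (σ x) * spin (σ y) * spin (σ z)) / ((cfg Q α).card : ℝ)
      = ((α : ℝ) * ((α : ℝ) - 1) * ((α : ℝ) - 2)
          - 3 * (α : ℝ) * ((α : ℝ) - 1) * ((Q : ℝ) - (α : ℝ))
          + 3 * (α : ℝ) * (((Q : ℝ) - (α : ℝ)) - 1) * ((Q : ℝ) - (α : ℝ))
          - (((Q : ℝ) - (α : ℝ)) - 2) * (((Q : ℝ) - (α : ℝ)) - 1) * ((Q : ℝ) - (α : ℝ)))
        / ((Q : ℝ) * ((Q : ℝ) - 1) * ((Q : ℝ) - 2)) := by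
  -- counting identity in ℝ
  have hkey : ∀ t : Finset (Fin Q),
      ((((univ : Finset (Fin Q)).powersetCard α).filter (fun s => t ⊆ s)).card : ℝ)
        * (Q.descFactorial t.card : ℕ)
        = (Q.choose α : ℝ) * (α.descFactorial t.card : ℕ) := by
    intro t
    by_cases h : t.card ≤ α
    · rw [count_subsets Q α t h]
      exact_mod_cast (Nat.mul_comm _ _).trans (desc_chain t.card α Q h hα).symm
    · have hlt : α < t.card := by omega
      have hd : α.descFactorial t.card = 0 := Nat.descFactorial_eq_zero_iff_lt.2 hlt
      rw [count_subsets_zero Q α t hlt, hd]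
      simp
  -- transfer the sum to subsets
  have hsum : (∑ σ ∈ cfg Q α, spin (σ x) * spin (σ y) * spin (σ z))
      = ∑ s ∈ (univ : Finset (Fin Q)).powersetCard α,
          spin (decide (x ∈ s)) * spin (decide (y ∈ s)) * spin (decide (z ∈ s)) := by
    rw [← sum_cfg Q α (fun s => spin (decide (x ∈ s)) * spin (decide (y ∈ s)) * spin (decide (z ∈ s)))]
    apply sum_congr rfl
    intro σ _
    simp
  -- pointwise expansion into indicators
  have hpt : ∀ s : Finset (Fin Q),
      spin (decide (x ∈ s)) * spin (decide (y ∈ s)) * spin (decide (z ∈ s))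
        = 8 * (if ({x, y, z} : Finset (Fin Q)) ⊆ s then (1:ℝ) else 0)
          - 4 * ((if ({x, y} : Finset (Fin Q)) ⊆ s then (1:ℝ) else 0)
              + (if ({x, z} : Finset (Fin Q)) ⊆ s then (1:ℝ) else 0)
              + (if ({y, z} : Finset (Fin Q)) ⊆ s then (1:ℝ) else 0))
          + 2 * ((if ({x} : Finset (Fin Q)) ⊆ s then (1:ℝ) else 0)
              + (if ({y} : Finset (Fin Q)) ⊆ s then (1:ℝ) else 0)
              + (if ({z} : Finset (Fin Q)) ⊆ s then (1:ℝ) else 0))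
          - 1 := by
    intro s
    by_cases hx : x ∈ s <;> by_cases hy : y ∈ s <;> by_cases hz : z ∈ s <;>
      simp [spin, insert_subset_iff, hx, hy, hz] <;> norm_num
  rw [hsum]
  rw [sum_congr rfl (fun s _ => hpt s)]
  -- split the sum
  simp only [sum_sub_distrib, sum_add_distrib, ← mul_sum, sum_boole, sum_const,
    nsmul_eq_mul, mul_one]
  rw [card_powersetCard, card_univ, Fintype.card_fin, card_cfg]
  -- cardinalities of the index sets
  have cxyz : ({x, y, z} : Finset (Fin Q)).card = 3 := by
    rw [card_insert_of_notMem (by simp [hxy, hxz]), card_insert_of_notMem (by simp [hyz]),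
      card_singleton]
  have cxy : ({x, y} : Finset (Fin Q)).card = 2 := by
    rw [card_insert_of_notMem (by simp [hxy]), card_singleton]
  have cxz : ({x, z} : Finset (Fin Q)).card = 2 := by
    rw [card_insert_of_notMem (by simp [hxz]), card_singleton]
  have cyz : ({y, z} : Finset (Fin Q)).card = 2 := by
    rw [card_insert_of_notMem (by simp [hyz]), card_singleton]
  have h3 := hkey {x, y, z}
  have hxy2 := hkey {x, y}
  have hxz2 := hkey {x, z}
  have hyz2 := hkey {y, z}
  have h1x := hkey {x}
  have h1y := hkey {y}
  have h1z := hkey {z}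
  rw [cxyz] at h3
  rw [cxy] at hxy2; rw [cxz] at hxz2; rw [cyz] at hyz2
  rw [card_singleton] at h1x h1y h1z
  -- cast descFactorials
  have dQ3 : ((Q.descFactorial 3 : ℕ) : ℝ) = (Q:ℝ) * ((Q:ℝ) - 1) * ((Q:ℝ) - 2) := df3_cast Q
  have dα3 : ((α.descFactorial 3 : ℕ) : ℝ) = (α:ℝ) * ((α:ℝ) - 1) * ((α:ℝ) - 2) := df3_cast α
  have dQ2 : ((Q.descFactorial 2 : ℕ) : ℝ) = (Q:ℝ) * ((Q:ℝ) - 1) := df2_cast Q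
  have dα2 : ((α.descFactorial 2 : ℕ) : ℝ) = (α:ℝ) * ((α:ℝ) - 1) := df2_cast α
  have dQ1 : ((Q.descFactorial 1 : ℕ) : ℝ) = (Q:ℝ) := by simp
  have dα1 : ((α.descFactorial 1 : ℕ) : ℝ) = (α:ℝ) := by simp
  rw [dQ3, dα3] at h3
  rw [dQ2, dα2] at hxy2 hxz2 hyz2
  rw [dQ1, dα1] at h1x h1y h1z
  -- nonvanishing
  have hQ3 : (3:ℝ) ≤ (Q:ℝ) := by exact_mod_cast hQ
  have hq0 : (Q:ℝ) ≠ 0 := by linarith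
  have hq1 : (Q:ℝ) - 1 ≠ 0 := by linarith
  have hq2 : (Q:ℝ) - 2 ≠ 0 := by linarith
  have hC : ((Q.choose α : ℕ) : ℝ) ≠ 0 := Nat.cast_ne_zero.2 (Nat.choose_pos hα).ne'
  -- solve counts from the identities
  have e3 : ((((univ : Finset (Fin Q)).powersetCard α).filter (fun s => ({x,y,z} : Finset (Fin Q)) ⊆ s)).card : ℝ)
      = (Q.choose α : ℝ) * ((α:ℝ) * ((α:ℝ) - 1) * ((α:ℝ) - 2)) / ((Q:ℝ) * ((Q:ℝ) - 1) * ((Q:ℝ) - 2)) := by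
    rw [eq_div_iff (by exact mul_ne_zero (mul_ne_zero hq0 hq1) hq2)]
    exact h3
  have exy : ((((univ : Finset (Fin Q)).powersetCard α).filter (fun s => ({x,y} : Finset (Fin Q)) ⊆ s)).card : ℝ)
      = (Q.choose α : ℝ) * ((α:ℝ) * ((α:ℝ) - 1)) / ((Q:ℝ) * ((Q:ℝ) - 1)) := by
    rw [eq_div_iff (by exact mul_ne_zero hq0 hq1)]
    exact hxy2
  have exz : ((((univ : Finset (Fin Q)).powersetCard α).filter (fun s => ({x,z} : Finset (Fin Q)) ⊆ s)).card : ℝ)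
      = (Q.choose α : ℝ) * ((α:ℝ) * ((α:ℝ) - 1)) / ((Q:ℝ) * ((Q:ℝ) - 1)) := by
    rw [eq_div_iff (by exact mul_ne_zero hq0 hq1)]
    exact hxz2
  have eyz : ((((univ : Finset (Fin Q)).powersetCard α).filter (fun s => ({y,z} : Finset (Fin Q)) ⊆ s)).card : ℝ)
      = (Q.choose α : ℝ) * ((α:ℝ) * ((α:ℝ) - 1)) / ((Q:ℝ) * ((Q:ℝ) - 1)) := by
    rw [eq_div_iff (by exact mul_ne_zero hq0 hq1)]
    exact hyz2
  have ex : ((((univ : Finset (Fin Q)).powersetCard α).filter (fun s => ({x} : Finset (Fin Q)) ⊆ s)).card : ℝ)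
      = (Q.choose α : ℝ) * (α:ℝ) / (Q:ℝ) := by
    rw [eq_div_iff hq0]
    exact h1x
  have ey : ((((univ : Finset (Fin Q)).powersetCard α).filter (fun s => ({y} : Finset (Fin Q)) ⊆ s)).card : ℝ)
      = (Q.choose α : ℝ) * (α:ℝ) / (Q:ℝ) := by
    rw [eq_div_iff hq0]
    exact h1y
  have ez : ((((univ : Finset (Fin Q)).powersetCard α).filter (fun s => ({z} : Finset (Fin Q)) ⊆ s)).card : ℝ)
      = (Q.choose α : ℝ) * (α:ℝ) / (Q:ℝ) := by
    rw [eq_div_iff hq0]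
    exact h1z
  rw [e3, exy, exz, eyz, ex, ey, ez]
  field_simp
  ring
end
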